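/- Under the collaborative recommendation model, if |R_n| → ∞ almost surely as n → ∞, then E[ |L_n^c| / |R_n| ] → 0 as n → ∞. -/

import Mathlib

open MeasureTheory ProbabilityTheory Finset Filter
open scoped BigOperators Topology

noncomputable section

namespace Collab

/-- Discrete measurable structure on finsets (used for the random sets of rated items). -/
instance instMeasFinset (α : Type*) : MeasurableSpace (Finset α) := ⊤

/-- Vectors of ratings. -/
abbrev Vec (d : ℕ) := Fin d → ℝ

/-- The Euclidean norm on `Fin d → ℝ`. -/
def nrm {d : ℕ} (x : Vec d) : ℝ := Real.sqrt (∑ j, x j ^ 2)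

/-- The cosine-type similarity `S̄`: the sum is restricted to the set
`J = {j : x j ≠ 0 ∧ x' j ≠ 0}`; the convention `S̄ = 0` when `J = ∅` is automatic
from `0 / 0 = 0`. -/
def simBar {d : ℕ} (x x' : Vec d) : ℝ :=
  (∑ j ∈ Finset.univ.filter (fun j => x j ≠ 0 ∧ x' j ≠ 0), x j * x' j) /
    (Real.sqrt (∑ j ∈ Finset.univ.filter (fun j => x j ≠ 0 ∧ x' j ≠ 0), x j ^ 2) *
      Real.sqrt (∑ j ∈ Finset.univ.filter (fun j => x j ≠ 0 ∧ x' j ≠ 0), x' j ^ 2))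

/-- Masking a vector by a set of coordinates: coordinates outside `m` are set to `0`. -/
def mask {d : ℕ} (m : Finset (Fin d)) (x : Vec d) : Vec d := fun j => if j ∈ m then x j else 0

/-- `i` is among the `k` points most similar to the target among the points indexed by `Rs`,
for the similarity `sim`, ties being broken by smaller index: the number of indices
`j ∈ Rs` that are strictly more similar than `i`, or as similar with `j ≤ i`
(this count includes `i` itself), is at most `k`. -/
def amongMS (sim : ℕ → ℝ) (Rs : Finset ℕ) (k i : ℕ) : Prop :=
  i ∈ Rs ∧ (Rs.filter (fun j => sim i < sim j ∨ (sim j = sim i ∧ j ≤ i))).card ≤ k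

/-- Index type for the mutually independent ingredients of the model: the new user's pair
`(X, Y)`, the database pairs `(X_i, Y_i)`, the preference sequences `(M_i^n)_{n ≥ 1}`,
and the random set `M`. -/
inductive Idx where
  | newuser : Idx
  | user (i : ℕ) : Idx
  | mseq (i : ℕ) : Idx
  | m : Idx

/-- Codomains of the independent ingredients. -/
def idxType (d : ℕ) : Idx → Type
  | .newuser => Vec d × ℝ
  | .user _ => Vec d × ℝ
  | .mseq _ => ℕ → Finset (Fin d)
  | .m => Finset (Fin d)

instance (d : ℕ) : ∀ x, MeasurableSpace (idxType d x)
  | .newuser => inferInstanceAs (MeasurableSpace (Vec d × ℝ))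
  | .user _ => inferInstanceAs (MeasurableSpace (Vec d × ℝ))
  | .mseq _ => inferInstanceAs (MeasurableSpace (ℕ → Finset (Fin d)))
  | .m => inferInstanceAs (MeasurableSpace (Finset (Fin d)))

variable {d : ℕ} {Ω : Type} [MeasurableSpace Ω]

/-- The family of independent ingredients of the model. -/
def fam (X : Ω → Vec d) (Y : Ω → ℝ) (M : Ω → Finset (Fin d))
    (Xi : ℕ → Ω → Vec d) (Yi : ℕ → Ω → ℝ) (Mi : ℕ → ℕ → Ω → Finset (Fin d)) :
    ∀ x : Idx, Ω → idxType d x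
  | .newuser => fun ω => (X ω, Y ω)
  | .user i => fun ω => (Xi i ω, Yi i ω)
  | .mseq i => fun ω n => Mi i (n + 1) ω
  | .m => M

/-- The sequential stochastic model for collaborative recommendation.  `(X, Y)` is the new
user, `M` the set of items he has rated, `(Xi i, Yi i)` the database users,
`Mi i n = M_i^n` the set of items rated by user `i` at his `n`-th time period (`n ≥ 1`),
`Mgen n = M^n` the generic preference sequence and `R n = 𝓡_n` the set of users having
rated the item of interest at time `n`. -/
structure Model (d : ℕ) (s : ℝ) {Ω : Type} [MeasurableSpace Ω] (P : Measure Ω)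
    (X : Ω → Vec d) (Y : Ω → ℝ) (M : Ω → Finset (Fin d))
    (Xi : ℕ → Ω → Vec d) (Yi : ℕ → Ω → ℝ)
    (Mi : ℕ → ℕ → Ω → Finset (Fin d)) (Mgen : ℕ → Ω → Finset (Fin d))
    (R : ℕ → Ω → Finset ℕ) : Prop where
  isProb : IsProbabilityMeasure P
  dim_pos : 1 ≤ d
  s_gt_one : 1 < s
  meas_X : Measurable X
  meas_Y : Measurable Y
  meas_M : Measurable M
  meas_Xi : ∀ i, Measurable (Xi i)
  meas_Yi : ∀ i, Measurable (Yi i)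
  meas_Mi : ∀ i n, Measurable (Mi i n)
  meas_Mgen : ∀ n, Measurable (Mgen n)
  meas_R : ∀ n, Measurable (R n)
  X_range : ∀ ω j, X ω j ∈ Set.Icc (1 : ℝ) s
  Y_range : ∀ ω, Y ω ∈ Set.Icc (1 : ℝ) s
  M_ne : ∀ ω, (M ω).Nonempty
  Mi_ne : ∀ i n ω, 1 ≤ n → (Mi i n ω).Nonempty
  Mi_mono : ∀ i n ω, Mi i n ω ⊆ Mi i (n + 1) ω
  Mgen_ne : ∀ n ω, 1 ≤ n → (Mgen n ω).Nonempty
  Mgen_mono : ∀ n ω, Mgen n ω ⊆ Mgen (n + 1) ω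
  /-- the database pairs are distributed as the new user's pair -/
  ident_user : ∀ i, 1 ≤ i → P.map (fun ω => (Xi i ω, Yi i ω)) = P.map (fun ω => (X ω, Y ω))
  /-- every preference sequence is distributed as the generic sequence `(M^n)_{n ≥ 1}` -/
  ident_seq : ∀ i, 1 ≤ i →
    P.map (fun ω => (fun n => Mi i (n + 1) ω)) = P.map (fun ω => (fun n => Mgen (n + 1) ω))
  /-- `M^1` is distributed as `M` -/
  ident_M1 : P.map (Mgen 1) = P.map M
  /-- a.s. there is a (random) time `n₀` at which all `d` items are rated -/
  Mgen_full : ∀ᵐ ω ∂P, ∃ n, 1 ≤ n ∧ Mgen n ω = Finset.univ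
  R_sub : ∀ n ω, R n ω ⊆ Finset.Icc 1 n
  R_ne : ∀ n ω, 1 ≤ n → (R n ω).Nonempty
  R_mono : ∀ n ω, R n ω ⊆ R (n + 1) ω
  /-- mutual independence of the new user, the database pairs, the preference sequences
  and `M` -/
  indep : iIndepFun (fam X Y M Xi Yi Mi) P
  /-- `𝓡_n` is independent of `M` and of the preference sequences -/
  indep_R : ∀ n, IndepFun (R n) (fun ω => (M ω, fun i m => Mi i (m + 1) ω)) P

variable (P : Measure Ω)

/-- `X* = masked version of X`. -/
def XstarF (M : Ω → Finset (Fin d)) (X : Ω → Vec d) (ω : Ω) : Vec d := mask (M ω) (X ω)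

/-- `X_i^{(n)}`: the coordinates of `X_i` corated (at time `n`) by user `i` and the new user. -/
def XinF (M : Ω → Finset (Fin d)) (Xi : ℕ → Ω → Vec d) (Mi : ℕ → ℕ → Ω → Finset (Fin d))
    (n i : ℕ) (ω : Ω) : Vec d := mask (Mi i (n + 1 - i) ω ∩ M ω) (Xi i ω)

/-- `X_i^*`: the coordinates of `X_i` rated by the new user. -/
def XistarF (M : Ω → Finset (Fin d)) (Xi : ℕ → Ω → Vec d) (i : ℕ) (ω : Ω) : Vec d :=
  mask (M ω) (Xi i ω)

/-- The penalty `p_i^{(n)} = |M_i^{n+1-i} ∩ M| / |M|`. -/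
def pinF (M : Ω → Finset (Fin d)) (Mi : ℕ → ℕ → Ω → Finset (Fin d)) (n i : ℕ) (ω : Ω) : ℝ :=
  ((Mi i (n + 1 - i) ω ∩ M ω).card : ℝ) / ((M ω).card : ℝ)

/-- The penalized similarity `S(X*, X_i^{(n)}) = p_i^{(n)} S̄(X*, X_i^{(n)})`. -/
def simS (X : Ω → Vec d) (M : Ω → Finset (Fin d)) (Xi : ℕ → Ω → Vec d)
    (Mi : ℕ → ℕ → Ω → Finset (Fin d)) (n i : ℕ) (ω : Ω) : ℝ :=
  pinF M Mi n i ω * simBar (XstarF M X ω) (XinF M Xi Mi n i ω)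

open scoped Classical in
/-- The `k_n`-NN weights `W_{ni}(X*)`, with the conventions `W_{ni} = 0` when
`|𝓡_n| < k_n` or `X_i^{(n)} = 0`. -/
def W (X : Ω → Vec d) (M : Ω → Finset (Fin d)) (Xi : ℕ → Ω → Vec d)
    (Mi : ℕ → ℕ → Ω → Finset (Fin d)) (R : ℕ → Ω → Finset ℕ) (k : ℕ → ℕ)
    (n i : ℕ) (ω : Ω) : ℝ :=
  if k n ≤ (R n ω).card ∧ XinF M Xi Mi n i ω ≠ 0 ∧
      amongMS (fun j => simS X M Xi Mi n j ω) (R n ω) (k n) i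
    then 1 / (k n : ℝ) else 0

/-- The cosine-type `k_n`-NN regression estimate `η_n(X*)`
(the convention `0 ⬝ ∞ = 0` is automatic since `y / 0 = 0` and `0 * y = 0` in Lean). -/
def etan (X : Ω → Vec d) (M : Ω → Finset (Fin d)) (Xi : ℕ → Ω → Vec d) (Yi : ℕ → Ω → ℝ)
    (Mi : ℕ → ℕ → Ω → Finset (Fin d)) (R : ℕ → Ω → Finset ℕ) (k : ℕ → ℕ)
    (n : ℕ) (ω : Ω) : ℝ :=
  nrm (XstarF M X ω) *
    ∑ i ∈ R n ω, W X M Xi Mi R k n i ω * (Yi i ω / nrm (XinF M Xi Mi n i ω))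

/-- The regression function evaluated at the new user: `η(X*) = E[Y | X*]`. -/
def etaX (X : Ω → Vec d) (Y : Ω → ℝ) (M : Ω → Finset (Fin d)) : Ω → ℝ :=
  P[Y|MeasurableSpace.comap (XstarF M X) inferInstance]

/-- `φ(X*) = E[Y / ‖X*‖ | X*/‖X*‖]`. -/
def phiX (X : Ω → Vec d) (Y : Ω → ℝ) (M : Ω → Finset (Fin d)) : Ω → ℝ :=
  P[fun ω => Y ω / nrm (XstarF M X ω)|MeasurableSpace.comap
    (fun ω => (nrm (XstarF M X ω))⁻¹ • XstarF M X ω) inferInstance]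

/-- `α_{ni} = P(M^{n+1-i} ⊉ M | M)`: by independence of `M` and the generic sequence, this
is the function of `M` given by `m ↦ P(M^{n+1-i} ⊉ m)`. -/
def alphaF (M : Ω → Finset (Fin d)) (Mgen : ℕ → Ω → Finset (Fin d)) (n i : ℕ) (ω : Ω) : ℝ :=
  (P {ω' | ¬ M ω ⊆ Mgen (n + 1 - i) ω'}).toReal

open scoped Classical in
/-- `L_n = {i ∈ 𝓡_n : T_i ≤ n}` where `T_i = min{k ≥ i : M ⊆ M_i^{k+1-i}}`. -/
def Lset (M : Ω → Finset (Fin d)) (Mi : ℕ → ℕ → Ω → Finset (Fin d)) (R : ℕ → Ω → Finset ℕ)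
    (n : ℕ) (ω : Ω) : Finset ℕ :=
  (R n ω).filter (fun i => ∃ kk, i ≤ kk ∧ kk ≤ n ∧ M ω ⊆ Mi i (kk + 1 - i) ω)

open scoped Classical in
/-- The Euclidean nearest neighbor weights `W*_{ni}(X*)` over the set `L_n`, computed with
the similarity `S̄(X*, X_i^*)`. -/
def Wstar (X : Ω → Vec d) (M : Ω → Finset (Fin d)) (Xi : ℕ → Ω → Vec d)
    (Mi : ℕ → ℕ → Ω → Finset (Fin d)) (R : ℕ → Ω → Finset ℕ) (k : ℕ → ℕ)
    (n i : ℕ) (ω : Ω) : ℝ :=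
  if amongMS (fun j => simBar (XstarF M X ω) (XistarF M Xi j ω)) (Lset M Mi R n ω) (k n) i
    then 1 / (k n : ℝ) else 0

/-! A user `i ∈ 𝓡_n` outside `L_n` has in particular not rated all the items of `M` at time
`n`. This event is independent of `𝓡_n`, and its probability `q (n - i)` depends only on the
age `n - i` of user `i` (all preference sequences have the same joint law with `M`, so it can
be computed on user `1`); `q m → 0` because a.s. the preference sequences eventually cover all
items. Hence `E[|L_nᶜ|/|𝓡_n|] ≤ E[(∑_{i ∈ 𝓡_n} q (n - i)) / |𝓡_n|]`. Distinct users have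
distinct ages, so at most `m` of them are below any threshold `m`, and the average inside
the expectation tends to `0` as soon as `|𝓡_n| → ∞`; dominated convergence concludes. -/

end Collab

theorem Finset.card_filter_sub_lt_le (n m : ℕ) {r : Finset ℕ} (hr : r ⊆ range (n + 1)) :
    (r.filter (fun i => n - i < m)).card ≤ m := by
  simpa using card_le_card_of_injOn (t := range m) (fun i => n - i)
    (fun i hi => by simpa using (mem_filter.mp hi).2)
    (fun i hi j hj hij => by
      have := mem_range.mp (hr (mem_filter.mp hi).1)
      have := mem_range.mp (hr (mem_filter.mp hj).1)
      simp only at hij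
      omega)

theorem Finset.sum_sub_le_mul_card_add {β : ℕ → ℝ} {ε : ℝ} {m : ℕ} (hε : 0 ≤ ε)
    (hβ1 : ∀ k, β k ≤ 1) (hβε : ∀ k, m ≤ k → β k ≤ ε) {n : ℕ} {r : Finset ℕ}
    (hr : r ⊆ range (n + 1)) :
    ∑ i ∈ r, β (n - i) ≤ ε * r.card + m := by
  calc ∑ i ∈ r, β (n - i) ≤ ∑ i ∈ r, (ε + if n - i < m then 1 else 0) := by
        refine sum_le_sum fun i _ => ?_
        split_ifs with h
        · linarith [hβ1 (n - i)]
        · linarith [hβε (n - i) (not_lt.mp h)]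
    _ = ε * r.card + (r.filter (fun i => n - i < m)).card := by
        rw [sum_add_distrib, sum_const, sum_boole, nsmul_eq_mul, mul_comm]
    _ ≤ ε * r.card + m := by
        gcongr
        exact_mod_cast card_filter_sub_lt_le n m hr

theorem Filter.Tendsto.sum_sub_div_card {β : ℕ → ℝ} (hβ0 : ∀ k, 0 ≤ β k) (hβ1 : ∀ k, β k ≤ 1)
    (hβ : Tendsto β atTop (𝓝 0)) {r : ℕ → Finset ℕ} (hr : ∀ n, r n ⊆ Finset.range (n + 1))
    (hcard : Tendsto (fun n => (r n).card) atTop atTop) :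
    Tendsto (fun n => (∑ i ∈ r n, β (n - i)) / ((r n).card : ℝ)) atTop (𝓝 0) := by
  refine tendsto_order.2 ⟨fun a ha => Eventually.of_forall fun n =>
    ha.trans_le (div_nonneg (Finset.sum_nonneg fun i _ => hβ0 _) (Nat.cast_nonneg _)), ?_⟩
  intro a ha
  obtain ⟨m, hm⟩ := eventually_atTop.mp (hβ.eventually (ge_mem_nhds (half_pos ha)))
  filter_upwards [((tendsto_const_div_atTop_nhds_zero_nat (m : ℝ)).comp hcard).eventually
    (gt_mem_nhds (half_pos ha)), hcard.eventually_gt_atTop 0] with n hsmall hpos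
  have hc : (0 : ℝ) < (r n).card := by exact_mod_cast hpos
  calc (∑ i ∈ r n, β (n - i)) / (r n).card ≤ (a / 2 * (r n).card + m) / (r n).card := by
        gcongr
        exact Finset.sum_sub_le_mul_card_add (half_pos ha).le hβ1 hm (hr n)
    _ = a / 2 + m / (r n).card := by field_simp
    _ < a := by linarith [show (m : ℝ) / (r n).card < a / 2 from hsmall]

namespace Collab

instance instDiscreteFinset (α : Type*) : DiscreteMeasurableSpace (Finset α) :=
  ⟨fun _ => MeasurableSpace.measurableSet_top⟩

theorem comp_eq_sum_indicator_preimage {Ω α : Type*} {R : Ω → α} {S : Finset α}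
    (hRS : ∀ ω, R ω ∈ S) (Φ : α → Ω → ℝ) :
    (fun ω => Φ (R ω) ω) = fun ω => ∑ r ∈ S, (R ⁻¹' {r}).indicator (Φ r) ω := by
  ext ω
  rw [sum_eq_single_of_mem (f := fun r => (R ⁻¹' {r}).indicator (Φ r) ω) (R ω) (hRS ω)
    fun r _ hr => Set.indicator_of_notMem (show ω ∉ R ⁻¹' {r} from fun h => hr h.symm) _,
    Set.indicator_of_mem (show ω ∈ R ⁻¹' {R ω} from rfl)]

section Independence

variable {Ω α ι β : Type*} [MeasurableSpace Ω] {P : Measure Ω} [MeasurableSpace α]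
  [MeasurableSingletonClass α] [MeasurableSpace β]

theorem integrable_comp_of_forall_mem {R : Ω → α} (hR : Measurable R) {S : Finset α}
    (hRS : ∀ ω, R ω ∈ S) {Φ : α → Ω → ℝ} (hΦ : ∀ r ∈ S, Integrable (Φ r) P) :
    Integrable (fun ω => Φ (R ω) ω) P := by
  rw [comp_eq_sum_indicator_preimage hRS]
  exact integrable_finsetSum _ fun r hr => (hΦ r hr).indicator (hR (measurableSet_singleton r))

theorem integral_comp_eq_sum_setIntegral {R : Ω → α} (hR : Measurable R) {S : Finset α}
    (hRS : ∀ ω, R ω ∈ S) {Φ : α → Ω → ℝ} (hΦ : ∀ r ∈ S, Integrable (Φ r) P) :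
    ∫ ω, Φ (R ω) ω ∂P = ∑ r ∈ S, ∫ ω in R ⁻¹' {r}, Φ r ω ∂P := by
  rw [comp_eq_sum_indicator_preimage hRS,
    integral_finsetSum _ fun r hr => (hΦ r hr).indicator (hR (measurableSet_singleton r))]
  exact sum_congr rfl fun r _ => integral_indicator (hR (measurableSet_singleton r))

theorem integrable_sum_indicator_comp_div [IsFiniteMeasure P] {Z : Ω → β} (hZ : Measurable Z)
    {B : ι → Set β} (hB : ∀ i, MeasurableSet (B i)) (r : Finset ι) (c : ℝ) :
    Integrable (fun ω => (∑ i ∈ r, (B i).indicator 1 (Z ω)) / c) P :=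
  (integrable_finsetSum _ fun i _ => (integrable_const (1 : ℝ)).indicator (hZ (hB i))).div_const _

theorem integrable_sum_indicator_div_card [IsFiniteMeasure P] {R : Ω → Finset ι} {Z : Ω → β}
    (hR : Measurable R) (hZ : Measurable Z) {T : Finset ι} (hRT : ∀ ω, R ω ⊆ T)
    {B : ι → Set β} (hB : ∀ i, MeasurableSet (B i)) :
    Integrable (fun ω => (∑ i ∈ R ω, (B i).indicator 1 (Z ω)) / ((R ω).card : ℝ)) P :=
  integrable_comp_of_forall_mem (Φ := fun r ω => (∑ i ∈ r, (B i).indicator 1 (Z ω)) / (r.card : ℝ))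
    hR (fun ω => mem_powerset.mpr (hRT ω)) fun r _ => integrable_sum_indicator_comp_div hZ hB r _

theorem integral_sum_indicator_div_card_eq [IsFiniteMeasure P] {R : Ω → Finset ι} {Z : Ω → β}
    (hR : Measurable R) (hZ : Measurable Z) (hRZ : IndepFun R Z P) {T : Finset ι}
    (hRT : ∀ ω, R ω ⊆ T) {B : ι → Set β} (hB : ∀ i, MeasurableSet (B i)) :
    ∫ ω, (∑ i ∈ R ω, (B i).indicator 1 (Z ω)) / ((R ω).card : ℝ) ∂P
      = ∫ ω, (∑ i ∈ R ω, P.real (Z ⁻¹' B i)) / ((R ω).card : ℝ) ∂P := by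
  have hRS : ∀ ω, R ω ∈ T.powerset := fun ω => mem_powerset.mpr (hRT ω)
  have hZB : ∀ i, MeasurableSet (Z ⁻¹' B i) := fun i => hZ (hB i)
  rw [integral_comp_eq_sum_setIntegral
      (Φ := fun r ω => (∑ i ∈ r, (B i).indicator 1 (Z ω)) / (r.card : ℝ)) hR hRS
      fun r _ => integrable_sum_indicator_comp_div hZ hB r _,
    integral_comp_eq_sum_setIntegral
      (Φ := fun r _ => (∑ i ∈ r, P.real (Z ⁻¹' B i)) / (r.card : ℝ)) hR hRS
      fun r _ => integrable_const _]
  refine sum_congr rfl fun r _ => ?_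
  rw [setIntegral_const, smul_eq_mul, integral_div,
    integral_finsetSum (f := fun i ω => (B i).indicator (1 : β → ℝ) (Z ω)) _ fun i _ =>
      ((integrable_const (1 : ℝ)).indicator (hZB i)).integrableOn, mul_div_assoc', mul_sum]
  congr 1
  refine sum_congr rfl fun i _ => ?_
  rw [show (fun ω => (B i).indicator 1 (Z ω)) = (Z ⁻¹' B i).indicator (1 : Ω → ℝ) from rfl,
    integral_indicator_one (hZB i), measureReal_restrict_apply (hZB i), measureReal_def,
    measureReal_def, measureReal_def, Set.inter_comm,
    hRZ.measure_inter_preimage_eq_mul _ _ (measurableSet_singleton r) (hB i), ENNReal.toReal_mul]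

end Independence

theorem tendsto_integral_sum_sub_div_card {Ω : Type*} [MeasurableSpace Ω] {P : Measure Ω}
    [IsFiniteMeasure P] {β : ℕ → ℝ} (hβ0 : ∀ k, 0 ≤ β k) (hβ1 : ∀ k, β k ≤ 1)
    (hβ : Tendsto β atTop (𝓝 0)) {R : ℕ → Ω → Finset ℕ} (hR : ∀ n, Measurable (R n))
    (hRn : ∀ n ω, R n ω ⊆ range (n + 1))
    (hRinf : ∀ᵐ ω ∂P, Tendsto (fun n => (R n ω).card) atTop atTop) :
    Tendsto (fun n => ∫ ω, (∑ i ∈ R n ω, β (n - i)) / ((R n ω).card : ℝ) ∂P) atTop (𝓝 0) := by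
  rw [← integral_zero Ω ℝ]
  refine tendsto_integral_of_dominated_convergence (fun _ => 1)
    (fun n => ((Measurable.of_discrete
      (f := fun r : Finset ℕ => (∑ i ∈ r, β (n - i)) / (r.card : ℝ))).comp
        (hR n)).aestronglyMeasurable)
    (integrable_const 1)
    (fun n => Eventually.of_forall fun ω => ?_) ?_
  · rw [Real.norm_of_nonneg (div_nonneg (sum_nonneg fun i _ => hβ0 _) (Nat.cast_nonneg _))]
    refine div_le_one_of_le₀ ?_ (Nat.cast_nonneg _)
    simpa using sum_le_card_nsmul _ _ 1 fun i _ => hβ1 (n - i)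
  · filter_upwards [hRinf] with ω hω
    exact hβ.sum_sub_div_card hβ0 hβ1 (fun n => hRn n ω) hω

theorem measurableSet_not_subset {α ι : Type*} [MeasurableSpace α] [Countable ι]
    {f g : α → Finset ι} (hf : Measurable f) (hg : Measurable g) :
    MeasurableSet {x | ¬ f x ⊆ g x} :=
  ((Measurable.of_discrete (f := fun q : Finset ι × Finset ι => ¬ q.1 ⊆ q.2)).comp
    (hf.prodMk hg)).setOf

section Model

variable {d : ℕ} {s : ℝ} {Ω : Type} [MeasurableSpace Ω] {P : Measure Ω} {X : Ω → Vec d}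
  {Y : Ω → ℝ} {M : Ω → Finset (Fin d)} {Xi : ℕ → Ω → Vec d} {Yi : ℕ → Ω → ℝ}
  {Mi : ℕ → ℕ → Ω → Finset (Fin d)} {Mgen : ℕ → Ω → Finset (Fin d)} {R : ℕ → Ω → Finset ℕ}

theorem Model.measurable_seq (hm : Model d s P X Y M Xi Yi Mi Mgen R) (i : ℕ) :
    Measurable fun ω n => Mi i (n + 1) ω :=
  measurable_pi_lambda _ fun n => hm.meas_Mi i (n + 1)

theorem Model.map_prod_seq_eq (hm : Model d s P X Y M Xi Yi Mi Mgen R) {i : ℕ} (hi : 1 ≤ i) :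
    P.map (fun ω => (M ω, fun n => Mi i (n + 1) ω))
      = (P.map M).prod (P.map fun ω n => Mgen (n + 1) ω) := by
  have := hm.isProb
  rw [← hm.ident_seq i hi]
  exact (indepFun_iff_map_prod_eq_prod_map_map hm.meas_M.aemeasurable
    (hm.measurable_seq i).aemeasurable).mp
    (hm.indep.indepFun (i := Idx.m) (j := Idx.mseq i) Idx.noConfusion)

theorem Model.measureReal_not_subset_eq (hm : Model d s P X Y M Xi Yi Mi Mgen R) {i : ℕ}
    (hi : 1 ≤ i) (m : ℕ) :
    P.real {ω | ¬ M ω ⊆ Mi i (m + 1) ω} = P.real {ω | ¬ M ω ⊆ Mi 1 (m + 1) ω} := by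
  have hS : MeasurableSet {p : Finset (Fin d) × (ℕ → Finset (Fin d)) | ¬ p.1 ⊆ p.2 m} :=
    measurableSet_not_subset measurable_fst ((measurable_pi_apply m).comp measurable_snd)
  calc P.real {ω | ¬ M ω ⊆ Mi i (m + 1) ω}
      = (P.map fun ω => (M ω, fun n => Mi i (n + 1) ω)).real _ :=
        (map_measureReal_apply (hm.meas_M.prodMk (hm.measurable_seq i)) hS).symm
    _ = (P.map fun ω => (M ω, fun n => Mi 1 (n + 1) ω)).real _ := by
        rw [hm.map_prod_seq_eq hi, hm.map_prod_seq_eq le_rfl]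
    _ = P.real {ω | ¬ M ω ⊆ Mi 1 (m + 1) ω} :=
        map_measureReal_apply (hm.meas_M.prodMk (hm.measurable_seq 1)) hS

theorem Model.ae_exists_seq_eq_univ (hm : Model d s P X Y M Xi Yi Mi Mgen R) {i : ℕ}
    (hi : 1 ≤ i) : ∀ᵐ ω ∂P, ∃ n, Mi i (n + 1) ω = univ := by
  have hC : MeasurableSet {u : ℕ → Finset (Fin d) | ∃ n, u n = univ} :=
    measurableSet_setOfPred.mpr (by fun_prop)
  have hgen : Measurable fun ω n => Mgen (n + 1) ω :=
    measurable_pi_lambda _ fun n => hm.meas_Mgen (n + 1)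
  rw [← ae_map_iff (hm.measurable_seq i).aemeasurable hC, hm.ident_seq i hi,
    ae_map_iff hgen.aemeasurable hC]
  filter_upwards [hm.Mgen_full] with ω ⟨n, hn, hfull⟩
  exact ⟨n - 1, by rwa [Nat.sub_add_cancel hn]⟩

theorem Model.tendsto_measureReal_not_subset (hm : Model d s P X Y M Xi Yi Mi Mgen R) :
    Tendsto (fun m => P.real {ω | ¬ M ω ⊆ Mi 1 (m + 1) ω}) atTop (𝓝 0) := by
  have := hm.isProb
  have hmeas : ∀ m, MeasurableSet {ω | ¬ M ω ⊆ Mi 1 (m + 1) ω} := fun m =>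
    measurableSet_not_subset hm.meas_M (hm.meas_Mi 1 (m + 1))
  have hanti : Antitone fun m => {ω | ¬ M ω ⊆ Mi 1 (m + 1) ω} := fun a b hab ω hω hsub =>
    hω (hsub.trans (monotone_nat_of_le_succ (fun k => hm.Mi_mono 1 k ω) (Nat.succ_le_succ hab)))
  have hnull : P (⋂ m, {ω | ¬ M ω ⊆ Mi 1 (m + 1) ω}) = 0 := by
    refine measure_mono_null ?_ (ae_iff.mp (hm.ae_exists_seq_eq_univ le_rfl))
    rintro ω hω ⟨n, hn⟩
    exact Set.mem_iInter.mp hω n (hn ▸ subset_univ _)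
  have h := tendsto_measure_iInter_atTop (fun m => (hmeas m).nullMeasurableSet) hanti
    ⟨0, measure_ne_top P _⟩
  rw [hnull] at h
  exact (ENNReal.tendsto_toReal ENNReal.zero_ne_top).comp h

open scoped Classical in
theorem Model.sdiff_Lset_subset (hm : Model d s P X Y M Xi Yi Mi Mgen R) (n : ℕ) (ω : Ω) :
    R n ω \ Lset M Mi R n ω ⊆ (R n ω).filter fun i => ¬ M ω ⊆ Mi i (n - i + 1) ω := by
  intro i hi
  obtain ⟨hiR, hiL⟩ := mem_sdiff.mp hi
  have hin : i ≤ n := (mem_Icc.mp (hm.R_sub n ω hiR)).2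
  refine mem_filter.mpr ⟨hiR, fun hsub => hiL (mem_filter.mpr ⟨hiR, n, hin, le_rfl, ?_⟩)⟩
  rwa [Nat.sub_add_comm hin]

theorem Model.integral_card_sdiff_Lset_div_le (hm : Model d s P X Y M Xi Yi Mi Mgen R) (n : ℕ) :
    ∫ ω, ((R n ω \ Lset M Mi R n ω).card : ℝ) / ((R n ω).card : ℝ) ∂P
      ≤ ∫ ω, (∑ i ∈ R n ω, P.real {ω' | ¬ M ω' ⊆ Mi 1 (n - i + 1) ω'}) / ((R n ω).card : ℝ) ∂P := by
  have := hm.isProb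
  set Z : Ω → Finset (Fin d) × (ℕ → ℕ → Finset (Fin d)) :=
    fun ω => (M ω, fun i m => Mi i (m + 1) ω)
  set B : ℕ → Set (Finset (Fin d) × (ℕ → ℕ → Finset (Fin d))) :=
    fun i => {p | ¬ p.1 ⊆ p.2 i (n - i)}
  have hZ : Measurable Z := hm.meas_M.prodMk (measurable_pi_lambda _ hm.measurable_seq)
  have hB : ∀ i, MeasurableSet (B i) := fun i => measurableSet_not_subset measurable_fst
    ((measurable_pi_apply (n - i)).comp ((measurable_pi_apply i).comp measurable_snd))
  calc _ ≤ ∫ ω, (∑ i ∈ R n ω, (B i).indicator 1 (Z ω)) / ((R n ω).card : ℝ) ∂P := by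
        refine integral_mono_of_nonneg (Eventually.of_forall fun ω => by positivity)
          (integrable_sum_indicator_div_card (hm.meas_R n) hZ (hm.R_sub n) hB)
          (Eventually.of_forall fun ω => ?_)
        refine div_le_div_of_nonneg_right ?_ (Nat.cast_nonneg _)
        calc ((R n ω \ Lset M Mi R n ω).card : ℝ)
            ≤ ((R n ω).filter fun i => ¬ M ω ⊆ Mi i (n - i + 1) ω).card := by
              exact_mod_cast card_le_card (hm.sdiff_Lset_subset n ω)
          _ = ∑ i ∈ R n ω, (B i).indicator 1 (Z ω) := by
              simp [card_filter, Set.indicator_apply, B, Z]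
    _ = ∫ ω, (∑ i ∈ R n ω, P.real (Z ⁻¹' B i)) / ((R n ω).card : ℝ) ∂P :=
        integral_sum_indicator_div_card_eq (hm.meas_R n) hZ (hm.indep_R n) (hm.R_sub n) hB
    _ = _ := integral_congr_ae (Eventually.of_forall fun ω => by
        refine congrArg (· / _) (sum_congr rfl fun i hi => ?_)
        exact hm.measureReal_not_subset_eq (mem_Icc.mp (hm.R_sub n ω hi)).1 (n - i))

end Model

/-- **Lemma 6.2, last statement.** If `|𝓡_n| → ∞` a.s., then `E[|L_nᶜ|/|𝓡_n|] → 0`. -/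
theorem statement7
    {d : ℕ} {s : ℝ} {Ω : Type} [MeasurableSpace Ω] {P : Measure Ω}
    {X : Ω → Vec d} {Y : Ω → ℝ} {M : Ω → Finset (Fin d)}
    {Xi : ℕ → Ω → Vec d} {Yi : ℕ → Ω → ℝ}
    {Mi : ℕ → ℕ → Ω → Finset (Fin d)} {Mgen : ℕ → Ω → Finset (Fin d)}
    {R : ℕ → Ω → Finset ℕ}
    (hmodel : Model d s P X Y M Xi Yi Mi Mgen R)
    (hRinf : ∀ᵐ ω ∂P, Filter.Tendsto (fun n => (R n ω).card) Filter.atTop Filter.atTop) :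
    Filter.Tendsto
      (fun n => ∫ ω, ((R n ω \ Lset M Mi R n ω).card : ℝ) / ((R n ω).card : ℝ) ∂P)
      Filter.atTop (nhds 0) := by
  have := hmodel.isProb
  have hR_range : ∀ n ω, R n ω ⊆ range (n + 1) := fun n ω i hi =>
    mem_range.mpr (Nat.lt_succ_of_le (mem_Icc.mp (hmodel.R_sub n ω hi)).2)
  refine tendsto_of_tendsto_of_tendsto_of_le_of_le tendsto_const_nhds
    (tendsto_integral_sum_sub_div_card (fun _ => measureReal_nonneg) (fun _ => measureReal_le_one)
      hmodel.tendsto_measureReal_not_subset hmodel.meas_R hR_range hRinf)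
    (fun n => integral_nonneg fun ω => by positivity) hmodel.integral_card_sdiff_Lset_div_le

end Collab
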